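/- arXiv:2001.07840 — 3 statements merged into one kernel-verified Lean document; each statement's English description precedes it below -/
import Mathlib

section
/- Consider the ODE system λ' = (2/3)λμ − (1/3)λ², μ' = (2/3)λμ − (1/3)μ² with initial data satisfying λ(0) > μ(0) > 0. Then the solution blows up in finite time: there exists T* < ∞ such that λ(t) + μ(t) → +∞ as t → T*⁻. -/
open Filter Set MeasureTheory intervalIntegral

noncomputable def GGfun (m0 C : ℝ) : ℝ → ℝ :=
  fun y => ∫ q in m0..y, 3 / Real.sqrt (q ^ 4 + 4 * C * q)

open Classical in
noncomputable def muFun (m0 C : ℝ) : ℝ → ℝ := fun t =>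
  if h : ∃ y, m0 / 2 < y ∧ GGfun m0 C y = t then h.choose else 1

lemma q_pos {C y : ℝ} (hC : 0 < C) (hy : 0 < y) : 0 < y ^ 4 + 4 * C * y := by
  have h1 : 0 < y ^ 4 := by positivity
  have h2 : 0 < 4 * C * y := by positivity
  linarith

lemma sqrtq_pos {C y : ℝ} (hC : 0 < C) (hy : 0 < y) :
    0 < Real.sqrt (y ^ 4 + 4 * C * y) := Real.sqrt_pos.2 (q_pos hC hy)

lemma contOn_phi {C : ℝ} (hC : 0 < C) :
    ContinuousOn (fun q : ℝ => 3 / Real.sqrt (q ^ 4 + 4 * C * q)) (Ioi 0) := by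
  apply ContinuousOn.div continuousOn_const
  · exact (Real.continuous_sqrt.comp (by continuity)).continuousOn
  · intro q hq
    exact ne_of_gt (sqrtq_pos hC hq)

lemma GG_hasDeriv {m0 C y : ℝ} (hm : 0 < m0) (hC : 0 < C) (hy : 0 < y) :
    HasDerivAt (GGfun m0 C) (3 / Real.sqrt (y ^ 4 + 4 * C * y)) y := by
  apply intervalIntegral.integral_hasDerivAt_right
  · apply ContinuousOn.intervalIntegrable
    apply (contOn_phi hC).mono
    intro q hq
    rcases le_total m0 y with h | h
    · rcases (uIcc_of_le h ▸ hq : q ∈ Icc m0 y) with ⟨h1, _⟩; exact lt_of_lt_of_le hm h1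
    · rcases (uIcc_of_ge h ▸ hq : q ∈ Icc y m0) with ⟨h1, _⟩; exact lt_of_lt_of_le hy h1
  · exact ⟨Ioi 0, Ioi_mem_nhds hy, (contOn_phi hC).aestronglyMeasurable measurableSet_Ioi⟩
  · exact (contOn_phi hC).continuousAt (Ioi_mem_nhds hy)

lemma GG_strictMono {m0 C : ℝ} (hm : 0 < m0) (hC : 0 < C) :
    StrictMonoOn (GGfun m0 C) (Ioi 0) := by
  apply strictMonoOn_of_deriv_pos (convex_Ioi 0)
  · intro y hy; exact (GG_hasDeriv hm hC hy).continuousAt.continuousWithinAt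
  · intro y hy
    rw [interior_Ioi] at hy
    rw [(GG_hasDeriv hm hC hy).deriv]
    exact div_pos (by norm_num) (sqrtq_pos hC hy)

lemma GG_self {m0 C : ℝ} : GGfun m0 C m0 = 0 := intervalIntegral.integral_same

lemma GG_le {m0 C y : ℝ} (hm : 0 < m0) (hC : 0 < C) (hy : m0 ≤ y) :
    GGfun m0 C y ≤ 3 / m0 := by
  have hposIcc : ∀ q ∈ Icc m0 y, (0:ℝ) < q := fun q hq => lt_of_lt_of_le hm hq.1
  have hint2 : IntervalIntegrable (fun q : ℝ => 3 / q ^ 2) volume m0 y := by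
    apply ContinuousOn.intervalIntegrable
    apply ContinuousOn.div continuousOn_const (by fun_prop)
    intro q hq
    rw [uIcc_of_le hy] at hq
    exact pow_ne_zero _ (ne_of_gt (hposIcc q hq))
  have hint1 : IntervalIntegrable (fun q : ℝ => 3 / Real.sqrt (q ^ 4 + 4 * C * q)) volume m0 y := by
    apply ContinuousOn.intervalIntegrable
    apply (contOn_phi hC).mono
    intro q hq
    rw [uIcc_of_le hy] at hq
    exact hposIcc q hq
  have hcomp : GGfun m0 C y ≤ ∫ q in m0..y, 3 / q ^ 2 := by
    apply intervalIntegral.integral_mono_on hy hint1 hint2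
    intro q hq
    have hq0 : 0 < q := hposIcc q hq
    have h1 : (q:ℝ) ^ 2 ≤ Real.sqrt (q ^ 4 + 4 * C * q) := by
      rw [show (q:ℝ) ^ 4 = (q ^ 2) ^ 2 by ring] 
      calc (q:ℝ)^2 = Real.sqrt ((q^2)^2) := (Real.sqrt_sq (by positivity)).symm
        _ ≤ _ := Real.sqrt_le_sqrt (by nlinarith)
    gcongr
  have hval : (∫ q in m0..y, 3 / q ^ 2) = 3 / m0 - 3 / y := by
    have : ∀ q ∈ uIcc m0 y, HasDerivAt (fun q : ℝ => -(3 / q)) (3 / q ^ 2) q := by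
      intro q hq
      rw [uIcc_of_le hy] at hq
      have hq0 : q ≠ 0 := ne_of_gt (hposIcc q hq)
      have := ((hasDerivAt_inv hq0).const_mul (3:ℝ)).neg
      exact this.congr_deriv (by field_simp)
    rw [intervalIntegral.integral_eq_sub_of_hasDerivAt this hint2]
    ring
  have : 0 < y := lt_of_lt_of_le hm hy
  calc GGfun m0 C y ≤ 3 / m0 - 3 / y := hcomp.trans_eq hval
    _ ≤ 3 / m0 := by
        have h3 : 0 < 3 / y := by positivity
        linarith

noncomputable def lamFun (C y : ℝ) : ℝ := (y ^ 2 + Real.sqrt (y ^ 4 + 4 * C * y)) / (2 * y)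

/-- For initial data `λ(0) > μ(0) > 0`, the solution of the ODE system
`λ' = (2/3)λμ − (1/3)λ²`, `μ' = (2/3)λμ − (1/3)μ²` blows up in finite time:
there is a finite `T*` and a solution on `[0, T*)` with the given initial data
such that `λ(t) + μ(t) → +∞` as `t → T*⁻`. -/
theorem blowup_ordered_case (l0 m0 : ℝ) (h1 : m0 < l0) (h2 : 0 < m0) :
    ∃ (Tstar : ℝ) (lam mu : ℝ → ℝ), 0 < Tstar ∧
      lam 0 = l0 ∧ mu 0 = m0 ∧
      (∀ t ∈ Set.Ico (0 : ℝ) Tstar,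
        HasDerivAt lam ((2 / 3) * lam t * mu t - (1 / 3) * (lam t) ^ 2) t ∧
        HasDerivAt mu ((2 / 3) * lam t * mu t - (1 / 3) * (mu t) ^ 2) t) ∧
      Tendsto (fun t => lam t + mu t)
        (nhdsWithin Tstar (Set.Iio Tstar)) atTop := by
  have hl0 : 0 < l0 := h2.trans h1
  set C : ℝ := l0 * m0 * (l0 - m0) with hCdef
  have hC : 0 < C := by
    apply mul_pos (mul_pos hl0 h2); linarith
  have hm2 : 0 < m0 / 2 := by linarith
  have hmono := GG_strictMono (m0 := m0) h2 hC
  set a : ℝ := GGfun m0 C (m0 / 2) with hadef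
  have ha : a < 0 := by
    have := hmono (mem_Ioi.2 hm2) (mem_Ioi.2 h2) (by linarith)
    rwa [GG_self] at this
  -- the supremum / blow-up time
  set S : Set ℝ := GGfun m0 C '' Ici m0 with hSdef
  have hbdd : BddAbove S := by
    refine ⟨3 / m0, ?_⟩
    rintro x ⟨y, hy, rfl⟩
    exact GG_le h2 hC hy
  have hne : S.Nonempty := ⟨GGfun m0 C m0, ⟨m0, mem_Ici.2 (le_refl _), rfl⟩⟩
  set L : ℝ := sSup S with hLdef
  have hlt : ∀ y, 0 < y → GGfun m0 C y < L := by
    intro y hy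
    have hy' : y < max y m0 + 1 := by have := le_max_left y m0; linarith
    have h0' : (0:ℝ) < max y m0 + 1 := by have := le_max_left y m0; linarith
    calc GGfun m0 C y < GGfun m0 C (max y m0 + 1) :=
          hmono (mem_Ioi.2 hy) (mem_Ioi.2 h0') hy'
      _ ≤ L := le_csSup hbdd ⟨max y m0 + 1, by simp [le_max_right y m0, le_add_of_le_of_nonneg], rfl⟩
  have hL0 : 0 < L := by have := hlt m0 h2; rwa [GG_self] at this
  -- surjectivity onto (a, L)
  have hexists : ∀ t, a < t → t < L → ∃ y, m0 / 2 < y ∧ GGfun m0 C y = t := by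
    intro t h1t h2t
    obtain ⟨x, ⟨Y, hY, rfl⟩, htY⟩ := exists_lt_of_lt_csSup hne h2t
    have hY2 : m0 / 2 ≤ Y := by have := mem_Ici.1 hY; linarith
    have hcont : ContinuousOn (GGfun m0 C) (Icc (m0 / 2) Y) := by
      intro z hz
      exact (GG_hasDeriv h2 hC (lt_of_lt_of_le hm2 hz.1)).continuousAt.continuousWithinAt
    have := intermediate_value_Ioo hY2 hcont (f := GGfun m0 C)
    obtain ⟨y, hy, hGy⟩ := this ⟨h1t, htY⟩
    exact ⟨y, hy.1, hGy⟩
  have hmuspec : ∀ t, a < t → t < L → m0 / 2 < muFun m0 C t ∧ GGfun m0 C (muFun m0 C t) = t := by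
    intro t h1t h2t
    have h := hexists t h1t h2t
    unfold muFun
    rw [dif_pos h]
    exact h.choose_spec
  -- basic positivity of mu
  have hmupos : ∀ t, a < t → t < L → 0 < muFun m0 C t := by
    intro t h1t h2t
    exact lt_trans hm2 (hmuspec t h1t h2t).1
  have hmu0 : muFun m0 C 0 = m0 := by
    have h := hmuspec 0 ha hL0
    have : GGfun m0 C (muFun m0 C 0) = GGfun m0 C m0 := by rw [h.2, GG_self]
    exact hmono.injOn (mem_Ioi.2 (hmupos 0 ha hL0)) (mem_Ioi.2 h2) this
  have hmuge : ∀ t, 0 ≤ t → t < L → m0 ≤ muFun m0 C t := by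
    intro t ht htL
    by_contra hcon
    push_neg at hcon
    have hat : a < t := lt_of_lt_of_le ha ht
    have h := hmuspec t hat htL
    have := hmono (mem_Ioi.2 (hmupos t hat htL)) (mem_Ioi.2 h2) hcon
    rw [h.2, GG_self] at this
    linarith
  -- continuity of mu on (a, L)
  have hcontmu : ∀ t, a < t → t < L → ContinuousAt (muFun m0 C) t := by
    intro t h1t h2t
    obtain ⟨hy1, hy2⟩ := hmuspec t h1t h2t
    set y0 := muFun m0 C t with hy0def
    rw [ContinuousAt, Metric.tendsto_nhds]
    intro ε hε
    set ε' : ℝ := min (ε / 2) ((y0 - m0 / 2) / 2) with hε'def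
    have hε'pos : 0 < ε' := lt_min (by linarith) (by linarith)
    have hε'le : ε' ≤ ε / 2 := min_le_left _ _
    have hε'le2 : ε' ≤ (y0 - m0 / 2) / 2 := min_le_right _ _
    have hy0m : m0 / 2 < y0 - ε' := by linarith
    have hy0m' : (0:ℝ) < y0 - ε' := lt_trans hm2 hy0m
    have hy0p : (0:ℝ) < y0 + ε' := by linarith
    have ht1 : GGfun m0 C (y0 - ε') < t := by
      rw [← hy2]
      exact hmono (mem_Ioi.2 hy0m') (mem_Ioi.2 (lt_trans hm2 hy1)) (by linarith)
    have ht2 : t < GGfun m0 C (y0 + ε') := by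
      rw [← hy2]
      exact hmono (mem_Ioi.2 (lt_trans hm2 hy1)) (mem_Ioi.2 hy0p) (by linarith)
    have hta : a < GGfun m0 C (y0 - ε') := hmono (mem_Ioi.2 hm2) (mem_Ioi.2 hy0m') hy0m
    have htL2 : GGfun m0 C (y0 + ε') < L := hlt _ hy0p
    filter_upwards [Ioo_mem_nhds ht1 ht2] with s hs
    have hs1 : a < s := lt_trans hta hs.1
    have hs2 : s < L := lt_trans hs.2 htL2
    obtain ⟨hz1, hz2⟩ := hmuspec s hs1 hs2
    have hzpos : 0 < muFun m0 C s := lt_trans hm2 hz1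
    have hlow : y0 - ε' < muFun m0 C s := by
      by_contra hcon
      push_neg at hcon
      have : GGfun m0 C (muFun m0 C s) ≤ GGfun m0 C (y0 - ε') :=
        hmono.monotoneOn (mem_Ioi.2 hzpos) (mem_Ioi.2 hy0m') hcon
      rw [hz2] at this
      linarith [hs.1]
    have hhigh : muFun m0 C s < y0 + ε' := by
      by_contra hcon
      push_neg at hcon
      have : GGfun m0 C (y0 + ε') ≤ GGfun m0 C (muFun m0 C s) :=
        hmono.monotoneOn (mem_Ioi.2 hy0p) (mem_Ioi.2 hzpos) hcon
      rw [hz2] at this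
      linarith [hs.2]
    rw [Real.dist_eq, abs_lt]
    constructor <;> [skip; skip] <;> simp only [← hy0def] <;> linarith
  -- derivative of mu
  have hmuderiv : ∀ t, a < t → t < L →
      HasDerivAt (muFun m0 C)
        (Real.sqrt ((muFun m0 C t) ^ 4 + 4 * C * muFun m0 C t) / 3) t := by
    intro t h1t h2t
    obtain ⟨hy1, hy2⟩ := hmuspec t h1t h2t
    have hy0 : 0 < muFun m0 C t := lt_trans hm2 hy1
    have hd : HasDerivAt (GGfun m0 C)
        (3 / Real.sqrt ((muFun m0 C t) ^ 4 + 4 * C * muFun m0 C t)) (muFun m0 C t) :=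
      GG_hasDeriv h2 hC hy0
    have hfg : ∀ᶠ s in nhds t, GGfun m0 C (muFun m0 C s) = s := by
      filter_upwards [Ioo_mem_nhds h1t h2t] with s hs
      exact (hmuspec s hs.1 hs.2).2
    have := HasDerivAt.of_local_left_inverse (hcontmu t h1t h2t) hd
      (ne_of_gt (div_pos (by norm_num) (sqrtq_pos hC hy0))) hfg
    exact this.congr_deriv (by rw [inv_div])
  -- the witnesses
  refine ⟨L, fun t => lamFun C (muFun m0 C t), muFun m0 C, hL0, ?_, hmu0, ?_, ?_⟩
  · -- lam 0 = l0
    show lamFun C (muFun m0 C 0) = l0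
    rw [hmu0]
    unfold lamFun
    have hsq : m0 ^ 4 + 4 * C * m0 = (2 * l0 * m0 - m0 ^ 2) ^ 2 := by
      rw [hCdef]; ring
    rw [hsq, Real.sqrt_sq (by nlinarith)]
    field_simp
    ring
  · -- the ODE system
    intro t ht
    obtain ⟨ht0, htL⟩ := ht
    have hat : a < t := lt_of_lt_of_le ha ht0
    have hyge : m0 ≤ muFun m0 C t := hmuge t ht0 htL
    set y : ℝ := muFun m0 C t with hydef
    have hy0 : 0 < y := lt_of_lt_of_le h2 hyge
    have hq0 : 0 < y ^ 4 + 4 * C * y := q_pos hC hy0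
    set g : ℝ := Real.sqrt (y ^ 4 + 4 * C * y) with hgdef
    have hg0 : 0 < g := Real.sqrt_pos.2 hq0
    have hg2 : g ^ 2 = y ^ 4 + 4 * C * y := Real.sq_sqrt (le_of_lt hq0)
    have hmud : HasDerivAt (muFun m0 C) (g / 3) t := hmuderiv t hat htL
    have hlamval : lamFun C y = (y ^ 2 + g) / (2 * y) := rfl
    constructor
    · -- derivative of lam
      have hq : HasDerivAt (fun z : ℝ => z ^ 4 + 4 * C * z) (4 * y ^ 3 + 4 * C) y := by
        have h1 := hasDerivAt_pow 4 y
        have h2' := (hasDerivAt_id y).const_mul (4 * C)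
        have := h1.add h2'
        exact this.congr_deriv (by push_cast; ring)
      have hsqrt : HasDerivAt (fun z : ℝ => Real.sqrt (z ^ 4 + 4 * C * z))
          (1 / (2 * g) * (4 * y ^ 3 + 4 * C)) y :=
        (Real.hasDerivAt_sqrt (ne_of_gt hq0)).comp y hq
      have hnum : HasDerivAt (fun z : ℝ => z ^ 2 + Real.sqrt (z ^ 4 + 4 * C * z))
          (2 * y + 1 / (2 * g) * (4 * y ^ 3 + 4 * C)) y := by
        have h1 := hasDerivAt_pow 2 y
        have := h1.add hsqrt
        exact this.congr_deriv (by push_cast; ring)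
      have hden : HasDerivAt (fun z : ℝ => 2 * z) (2 : ℝ) y := by
        simpa using (hasDerivAt_id y).const_mul (2:ℝ)
      have hF : HasDerivAt (fun z : ℝ => lamFun C z)
          (((2 * y + 1 / (2 * g) * (4 * y ^ 3 + 4 * C)) * (2 * y)
              - (y ^ 2 + g) * 2) / (2 * y) ^ 2) y := by
        have := hnum.div hden (by positivity)
        exact this
      have hcomp := hF.comp t hmud
      refine hcomp.congr_deriv (Eq.symm ?_)
      rw [show (fun t => lamFun C (muFun m0 C t)) t = (y ^ 2 + g) / (2 * y) from hlamval]
      field_simp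
      linear_combination hg2
    · -- derivative of mu
      refine hmud.congr_deriv (Eq.symm ?_)
      rw [show (fun t => lamFun C (muFun m0 C t)) t = (y ^ 2 + g) / (2 * y) from hlamval]
      field_simp
      ring
  · -- blow-up
    rw [tendsto_atTop]
    intro M
    set Y : ℝ := max M m0 with hYdef
    have hY0 : 0 < Y := lt_of_lt_of_le h2 (le_max_right _ _)
    have hGYL : GGfun m0 C Y < L := hlt Y hY0
    have hGYa : a < GGfun m0 C Y :=
      hmono (mem_Ioi.2 hm2) (mem_Ioi.2 hY0) (by have := le_max_right M m0; linarith)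
    have hmem : Ioo (GGfun m0 C Y) L ∈ nhdsWithin L (Iio L) :=
      Ioo_mem_nhdsLT_of_mem ⟨hGYL, le_refl L⟩
    filter_upwards [hmem] with s hs
    have hs1 : a < s := lt_trans hGYa hs.1
    obtain ⟨hz1, hz2⟩ := hmuspec s hs1 hs.2
    have hzpos : 0 < muFun m0 C s := lt_trans hm2 hz1
    have hYlt : Y < muFun m0 C s := by
      by_contra hcon
      push_neg at hcon
      have := hmono.monotoneOn (mem_Ioi.2 hzpos) (mem_Ioi.2 hY0) hcon
      rw [hz2] at this
      linarith [hs.1]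
    have hlamnn : 0 ≤ lamFun C (muFun m0 C s) := by
      unfold lamFun
      apply div_nonneg
      · have := Real.sqrt_nonneg ((muFun m0 C s) ^ 4 + 4 * C * muFun m0 C s)
        nlinarith
      · linarith
    have : M ≤ Y := le_max_left _ _
    linarith
end

section
/- Let 0 < α < 1 and let V ⊂ ℝᵈ be open with 0 ∈ closure(V). If f, g : V → ℝ satisfy f(0) = 0 (in the sense that f extends continuously to 0 with value 0), f ∈ Cᵅ(V), and g ∈ C̊ᵅ(V), then the product fg ∈ Cᵅ(V) with ‖fg‖_{Cᵅ(V)} ≤ C ‖g‖_{C̊ᵅ(V)} ‖f‖_{Cᵅ(V)} for a constant C depending only on α. -/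
open Filter Set

lemma rpow_add_le' {α : ℝ} (hα0 : 0 ≤ α) (hα1 : α ≤ 1) {x y : ℝ}
    (hx : 0 ≤ x) (hy : 0 ≤ y) : (x + y) ^ α ≤ x ^ α + y ^ α := by
  have h := NNReal.rpow_add_le_add_rpow (Real.toNNReal x) (Real.toNNReal y) hα0 hα1
  have h2 := NNReal.coe_le_coe.2 h
  rw [NNReal.coe_add, NNReal.coe_rpow, NNReal.coe_rpow, NNReal.coe_rpow, NNReal.coe_add,
    Real.coe_toNNReal x hx, Real.coe_toNNReal y hy] at h2
  exact h2

lemma rpow_sub_le' {α : ℝ} (hα0 : 0 ≤ α) (hα1 : α ≤ 1) {x y : ℝ}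
    (hy : 0 ≤ y) (hxy : y ≤ x) : x ^ α - y ^ α ≤ (x - y) ^ α := by
  have h := rpow_add_le' hα0 hα1 (x := x - y) (y := y) (by linarith) hy
  rw [sub_add_cancel] at h
  linarith

/-- Product rule between `Cᵅ` and the scale-invariant space `C̊ᵅ`: for
`0 < α < 1` there is a constant `C = C(α)` such that whenever `f ∈ Cᵅ(V)`
vanishes at the origin (in the sense of a continuous extension) and
`g ∈ C̊ᵅ(V)`, the product satisfies `‖fg‖_{Cᵅ(V)} ≤ C‖g‖_{C̊ᵅ(V)}‖f‖_{Cᵅ(V)}`. -/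
theorem product_rule_scale_invariant (α : ℝ) (hα : 0 < α) (hα1 : α < 1) :
    ∃ C : ℝ, 0 < C ∧
      ∀ (d : ℕ) (V : Set (EuclideanSpace ℝ (Fin d)))
        (f g : EuclideanSpace ℝ (Fin d) → ℝ) (Ff Gg : ℝ),
        IsOpen V → (0 : EuclideanSpace ℝ (Fin d)) ∈ closure V →
        Tendsto f (nhdsWithin (0 : EuclideanSpace ℝ (Fin d)) V) (nhds 0) →
        (∀ x ∈ V, |f x| ≤ Ff) →
        (∀ x ∈ V, ∀ y ∈ V, |f x - f y| ≤ Ff * ‖x - y‖ ^ α) →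
        (∀ x ∈ V, |g x| ≤ Gg) →
        (∀ x ∈ V, ∀ y ∈ V, |‖x‖ ^ α * g x - ‖y‖ ^ α * g y| ≤ Gg * ‖x - y‖ ^ α) →
        (∀ x ∈ V, |f x * g x| ≤ C * Gg * Ff) ∧
        (∀ x ∈ V, ∀ y ∈ V, |f x * g x - f y * g y| ≤ C * Gg * Ff * ‖x - y‖ ^ α) := by
  refine ⟨3, by norm_num, ?_⟩
  intro d V f g Ff Gg hV h0 hf0 hfb hfh hgb hgh
  -- nonemptiness consequences
  have hne : (nhdsWithin (0 : EuclideanSpace ℝ (Fin d)) V).NeBot :=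
    mem_closure_iff_nhdsWithin_neBot.mp h0
  -- pointwise bound |f x| ≤ Ff * ‖x‖ ^ α
  have hfx : ∀ x ∈ V, |f x| ≤ Ff * ‖x‖ ^ α := by
    intro x hx
    have t1 : Tendsto (fun y => |f x - f y|) (nhdsWithin 0 V) (nhds |f x|) := by
      have := (tendsto_const_nhds (x := f x) (f := nhdsWithin (0 : EuclideanSpace ℝ (Fin d)) V)).sub hf0
      simpa using this.abs
    have t2 : Tendsto (fun y : EuclideanSpace ℝ (Fin d) => Ff * ‖x - y‖ ^ α)
        (nhdsWithin 0 V) (nhds (Ff * ‖x‖ ^ α)) := by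
      have hc : Continuous fun y : EuclideanSpace ℝ (Fin d) => Ff * ‖x - y‖ ^ α :=
        continuous_const.mul
          (((continuous_const.sub continuous_id).norm).rpow_const fun y => Or.inr hα.le)
      have := (hc.tendsto 0).mono_left (nhdsWithin_le_nhds (s := V))
      simpa using this
    exact le_of_tendsto_of_tendsto t1 t2
      (eventually_mem_nhdsWithin.mono fun y hy => hfh x hx y hy)
  have hFf : ∀ x ∈ V, 0 ≤ Ff := fun x hx => le_trans (abs_nonneg _) (hfb x hx)
  have hGg : ∀ x ∈ V, 0 ≤ Gg := fun x hx => le_trans (abs_nonneg _) (hgb x hx)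
  -- key Hölder estimate assuming ‖y‖ ≤ ‖x‖
  have key : ∀ x ∈ V, ∀ y ∈ V, ‖y‖ ≤ ‖x‖ →
      |f x * g x - f y * g y| ≤ 3 * Gg * Ff * ‖x - y‖ ^ α := by
    intro x hx y hy hyx
    have hFf' := hFf x hx
    have hGg' := hGg x hx
    have hgy := hgb y hy
    have h1 : |f x * g x - f y * g y| ≤ |f x| * |g x - g y| + |g y| * |f x - f y| := by
      have : f x * g x - f y * g y = f x * (g x - g y) + g y * (f x - f y) := by ring
      rw [this]
      exact (abs_add_le _ _).trans (by rw [abs_mul, abs_mul])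
    have hxn : (0:ℝ) ≤ ‖x‖ := norm_nonneg _
    have hyn : (0:ℝ) ≤ ‖y‖ := norm_nonneg _
    have hrx : (0:ℝ) ≤ ‖x‖ ^ α := Real.rpow_nonneg hxn α
    have hsub : ‖x‖ ^ α - ‖y‖ ^ α ≤ ‖x - y‖ ^ α := by
      calc ‖x‖ ^ α - ‖y‖ ^ α ≤ (‖x‖ - ‖y‖) ^ α := rpow_sub_le' hα.le hα1.le hyn hyx
        _ ≤ ‖x - y‖ ^ α :=
          Real.rpow_le_rpow (by linarith) (norm_sub_norm_le x y) hα.le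
    -- first term
    have hterm1 : |f x| * |g x - g y| ≤ 2 * Gg * Ff * ‖x - y‖ ^ α := by
      have e1 : |f x| * |g x - g y| ≤ Ff * (‖x‖ ^ α * |g x - g y|) := by
        rw [← mul_assoc]
        exact mul_le_mul (hfx x hx) le_rfl (abs_nonneg _)
          (by positivity)
      have e2 : ‖x‖ ^ α * |g x - g y| = |‖x‖ ^ α * g x - ‖x‖ ^ α * g y| := by
        rw [← mul_sub, abs_mul, abs_of_nonneg hrx]
      have e3 : |‖x‖ ^ α * g x - ‖x‖ ^ α * g y| ≤
          |‖x‖ ^ α * g x - ‖y‖ ^ α * g y| + |‖y‖ ^ α * g y - ‖x‖ ^ α * g y| := by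
        have := abs_sub_le (‖x‖ ^ α * g x) (‖y‖ ^ α * g y) (‖x‖ ^ α * g y)
        simpa using this
      have e4 : |‖y‖ ^ α * g y - ‖x‖ ^ α * g y| ≤ Gg * ‖x - y‖ ^ α := by
        have : |‖y‖ ^ α * g y - ‖x‖ ^ α * g y| = (‖x‖ ^ α - ‖y‖ ^ α) * |g y| := by
          rw [← sub_mul, abs_mul, abs_of_nonpos (by
            have : ‖y‖ ^ α ≤ ‖x‖ ^ α := Real.rpow_le_rpow hyn hyx hα.le
            linarith)]
          ring
        rw [this]
        calc (‖x‖ ^ α - ‖y‖ ^ α) * |g y| ≤ ‖x - y‖ ^ α * Gg :=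
              mul_le_mul hsub hgy (abs_nonneg _) (by positivity)
          _ = Gg * ‖x - y‖ ^ α := by ring
      calc |f x| * |g x - g y| ≤ Ff * (‖x‖ ^ α * |g x - g y|) := e1
        _ = Ff * |‖x‖ ^ α * g x - ‖x‖ ^ α * g y| := by rw [e2]
        _ ≤ Ff * (Gg * ‖x - y‖ ^ α + Gg * ‖x - y‖ ^ α) := by
            apply mul_le_mul_of_nonneg_left _ hFf'
            exact e3.trans (add_le_add (hgh x hx y hy) e4)
        _ = 2 * Gg * Ff * ‖x - y‖ ^ α := by ring
    have hterm2 : |g y| * |f x - f y| ≤ Gg * Ff * ‖x - y‖ ^ α := by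
      calc |g y| * |f x - f y| ≤ Gg * (Ff * ‖x - y‖ ^ α) :=
            mul_le_mul hgy (hfh x hx y hy) (abs_nonneg _) hGg'
        _ = Gg * Ff * ‖x - y‖ ^ α := by ring
    linarith
  constructor
  · intro x hx
    calc |f x * g x| = |f x| * |g x| := abs_mul _ _
      _ ≤ Ff * Gg := mul_le_mul (hfb x hx) (hgb x hx) (abs_nonneg _) (hFf x hx)
      _ ≤ 3 * Gg * Ff := by nlinarith [hFf x hx, hGg x hx]
  · intro x hx y hy
    rcases le_total ‖y‖ ‖x‖ with h | h
    · exact key x hx y hy h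
    · have := key y hy x hx h
      rw [abs_sub_comm, norm_sub_rev] at this
      exact this
end

section
/- Let K : ℝⁿ \ {0} → ℝ satisfy |K(z)| ≤ C₀|z|⁻ⁿ, and let h : ℝⁿ → ℝ be measurable with |h(x)| ≤ A|x|ᵅ for some 0 < α < 1 and h supported in the ball B(0,R). Suppose x ∈ ℝⁿ satisfies dist(x, supp h) ≥ c|x| for some c > 0. Then the integral T[h](x) = ∫ K(x−y)h(y) dy is absolutely convergent and |T[h](x)| ≤ C(n, α, c, C₀) · A · Rᵅ · (1 + |ln(|x|/R)| · 𝟙_{|x| ≤ R}) — in particular, it is bounded by C(R)(1 + A) uniformly over such x. -/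
open MeasureTheory Metric Set ENNReal

section aux

variable {n : ℕ}

lemma aux_finite_lintegral (hn : 0 < n) {s R : ℝ} (hs : -(n : ℝ) < s) (hs0 : s < 0)
    (hR : 0 < R) :
    ∫⁻ y : EuclideanSpace ℝ (Fin n) in ball 0 R, ENNReal.ofReal (‖y‖ ^ s) < ∞ := by
  set E := EuclideanSpace ℝ (Fin n)
  set μ' := (volume : Measure E).restrict (ball 0 R) with hμ'
  have hmeas : Measurable fun y : E => ‖y‖ ^ s := (by fun_prop : Measurable fun y : EuclideanSpace ℝ (Fin n) => ‖y‖ ^ s)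
  have hpos : (0 : E → ℝ) ≤ᵐ[μ'] fun y => ‖y‖ ^ s :=
    Filter.Eventually.of_forall fun y => Real.rpow_nonneg (norm_nonneg _) _
  rw [lintegral_eq_lintegral_meas_le μ' hpos hmeas.aemeasurable]
  set T := R ^ s with hT
  have hT0 : 0 < T := Real.rpow_pos_of_pos hR _
  have key : ∀ t : ℝ, 0 < t →
      μ' {a : E | t ≤ ‖a‖ ^ s} ≤ volume (closedBall (0 : E) (t ^ s⁻¹)) := by
    intro t ht
    refine le_trans (measure_mono ?_) (Measure.restrict_le_self _)
    intro a ha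
    simp only [mem_setOf_eq] at ha
    rcases eq_or_ne a 0 with rfl | ha0
    · exfalso
      rw [norm_zero, Real.zero_rpow hs0.ne] at ha
      linarith
    · have hna : 0 < ‖a‖ := norm_pos_iff.2 ha0
      rw [mem_closedBall_zero_iff]
      exact (Real.le_rpow_inv_iff_of_neg hna ht hs0).2 ha
  have hesub : Ioi (0:ℝ) ⊆ Ioc 0 T ∪ Ioi T := Ioi_subset_Ioc_union_Ioi
  calc ∫⁻ t in Ioi (0:ℝ), μ' {a : E | t ≤ ‖a‖ ^ s}
      ≤ ∫⁻ t in Ioc 0 T ∪ Ioi T, μ' {a : E | t ≤ ‖a‖ ^ s} := lintegral_mono_set hesub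
    _ ≤ (∫⁻ t in Ioc 0 T, μ' {a : E | t ≤ ‖a‖ ^ s})
        + ∫⁻ t in Ioi T, μ' {a : E | t ≤ ‖a‖ ^ s} := lintegral_union_le _ _ _
    _ < ∞ := by
        refine ENNReal.add_lt_top.2 ⟨?_, ?_⟩
        · have hb : ∀ t ∈ Ioc (0:ℝ) T, μ' {a : E | t ≤ ‖a‖ ^ s} ≤ volume (ball (0 : E) R) := by
            intro t _
            refine le_trans (measure_mono (subset_univ _)) ?_
            rw [hμ', Measure.restrict_apply_univ]
          refine lt_of_le_of_lt (setLIntegral_mono' measurableSet_Ioc hb) ?_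
          rw [setLIntegral_const]
          exact ENNReal.mul_lt_top measure_ball_lt_top
            (by rw [Real.volume_Ioc]; exact ENNReal.ofReal_lt_top)
        · have hb : ∀ t ∈ Ioi T, μ' {a : E | t ≤ ‖a‖ ^ s} ≤
              ENNReal.ofReal (t ^ (s⁻¹ * n)) * volume (ball (0 : E) 1) := by
            intro t ht
            have ht0 : 0 < t := hT0.trans ht
            refine le_trans (key t ht0) ?_
            rw [Measure.addHaar_closedBall volume 0 (Real.rpow_nonneg ht0.le _),
              finrank_euclideanSpace_fin, ← Real.rpow_natCast (t ^ s⁻¹) n,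
              ← Real.rpow_mul ht0.le]
          refine lt_of_le_of_lt (setLIntegral_mono' measurableSet_Ioi hb) ?_
          rw [lintegral_mul_const' _ _ measure_ball_lt_top.ne]
          refine ENNReal.mul_lt_top ?_ measure_ball_lt_top
          refine IntegrableOn.setLIntegral_lt_top ?_
          refine integrableOn_Ioi_rpow_of_lt ?_ hT0
          rw [inv_mul_eq_div, div_lt_iff_of_neg hs0]
          push_cast
          linarith

lemma aux_integrableOn (hn : 0 < n) {s R : ℝ} (hs : -(n : ℝ) < s) (hs0 : s < 0) (hR : 0 < R) :
    IntegrableOn (fun y : EuclideanSpace ℝ (Fin n) => ‖y‖ ^ s) (ball 0 R) := by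
  constructor
  · exact ((by fun_prop : Measurable fun y : EuclideanSpace ℝ (Fin n) => ‖y‖ ^ s)).aestronglyMeasurable
  · rw [hasFiniteIntegral_iff_ofReal
      (Filter.Eventually.of_forall fun y => Real.rpow_nonneg (norm_nonneg _) _)]
    exact aux_finite_lintegral hn hs hs0 hR

lemma aux_eval (hn : 0 < n) {s R : ℝ} (hs : -(n : ℝ) < s) (hs0 : s < 0) (hR : 0 < R) :
    ∫ y : EuclideanSpace ℝ (Fin n) in ball 0 R, ‖y‖ ^ s =
      n * (volume (ball (0 : EuclideanSpace ℝ (Fin n)) 1)).toReal * (R ^ (s + n) / (s + n)) := by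
  set E := EuclideanSpace ℝ (Fin n)
  haveI : Nontrivial E := Module.nontrivial_of_finrank_pos (R := ℝ)
    (by rw [finrank_euclideanSpace_fin]; exact hn)
  set f : ℝ → ℝ := fun r => if r < R then r ^ s else 0 with hf
  have h1 : ∫ y : E in ball 0 R, ‖y‖ ^ s = ∫ y : E, f ‖y‖ := by
    rw [← integral_indicator measurableSet_ball]
    refine integral_congr_ae (Filter.Eventually.of_forall fun y => ?_)
    simp only [hf]
    by_cases hy : y ∈ ball (0 : E) R
    · rw [indicator_of_mem hy, if_pos (mem_ball_zero_iff.1 hy)]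
    · rw [indicator_of_notMem hy, if_neg (fun hlt => hy (mem_ball_zero_iff.2 hlt))]
  rw [h1, MeasureTheory.integral_fun_norm_addHaar volume f, finrank_euclideanSpace_fin]
  have h2 : ∫ r in Ioi (0:ℝ), r ^ (n - 1) • f r = R ^ (s + n) / (s + n) := by
    have h3 : ∀ r ∈ Ioo (0:ℝ) R, r ^ (n - 1) • f r = r ^ (s + n - 1) := by
      intro r hr
      simp only [hf, smul_eq_mul, if_pos hr.2]
      rw [← Real.rpow_natCast r (n - 1), ← Real.rpow_add hr.1]
      congr 1
      rw [Nat.cast_sub hn, Nat.cast_one]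
      ring
    have h4 : ∫ r in Ioi (0:ℝ), r ^ (n - 1) • f r = ∫ r in Ioo (0:ℝ) R, r ^ (n - 1) • f r := by
      rw [← integral_indicator measurableSet_Ioo, ← integral_indicator measurableSet_Ioi]
      refine integral_congr_ae (Filter.Eventually.of_forall fun r => ?_)
      simp only [indicator_apply, mem_Ioo, mem_Ioi, hf, smul_eq_mul]
      by_cases h1 : 0 < r <;> by_cases h2 : r < R <;>
        simp [h1, h2]
    rw [h4, setIntegral_congr_fun measurableSet_Ioo h3,
      ← MeasureTheory.integral_Ioc_eq_integral_Ioo,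
      ← intervalIntegral.integral_of_le hR.le,
      integral_rpow (Or.inl (by push_cast; linarith))]
    have he : s + (n : ℝ) - 1 + 1 = s + n := by ring
    rw [he, Real.zero_rpow (ne_of_gt (by push_cast; linarith))]
    ring
  rw [h2, nsmul_eq_mul, smul_eq_mul]
  simp only [Measure.real]
  ring

end aux

/-- L∞ part of the symmetry reduction lemma: if `|K(z)| ≤ C₀|z|⁻ⁿ`, `h` is
measurable with `|h(x)| ≤ A|x|ᵅ` and supported in `B(0,R)`, and the evaluation
point `x` satisfies `dist(x, supp h) ≥ c|x|`, then `∫ K(x−y)h(y) dy` is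
absolutely convergent and bounded by
`C(n,α,c,C₀)·A·Rᵅ·(1 + |ln(|x|/R)|·𝟙_{|x|≤R})`; in particular it is bounded by
`C(R)(1+A)` uniformly over such `x`. -/
theorem symmetry_reduction_linfty (n : ℕ) (α c C₀ : ℝ)
    (hn : 0 < n) (hα : 0 < α) (hα1 : α < 1) (hc : 0 < c) (hC₀ : 0 ≤ C₀) :
    ∃ C : ℝ, 0 < C ∧
      ∀ (K h : EuclideanSpace ℝ (Fin n) → ℝ) (A R : ℝ)
        (x : EuclideanSpace ℝ (Fin n)),
        0 ≤ A → 0 < R → Measurable K → Measurable h →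
        (∀ z : EuclideanSpace ℝ (Fin n), z ≠ 0 → |K z| ≤ C₀ * ‖z‖ ^ (-(n : ℝ))) →
        (∀ y, |h y| ≤ A * ‖y‖ ^ α) →
        Function.support h ⊆ Metric.ball (0 : EuclideanSpace ℝ (Fin n)) R →
        c * ‖x‖ ≤ Metric.infDist x (Function.support h) →
        Integrable (fun y => K (x - y) * h y) ∧
        |∫ y, K (x - y) * h y| ≤
          C * A * R ^ α * (1 + (if ‖x‖ ≤ R then |Real.log (‖x‖ / R)| else 0)) := by
  have hcc : 0 < c / (1 + c) := by positivity
  set v := (volume (ball (0 : EuclideanSpace ℝ (Fin n)) 1)).toReal with hv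
  have hv0 : 0 ≤ v := ENNReal.toReal_nonneg
  set M := C₀ * (c / (1 + c)) ^ (-(n : ℝ)) with hM
  have hM0 : 0 ≤ M := by positivity
  set C := M * ((n : ℝ) * v * (1 / α)) + 1 with hC
  have hC0 : 0 < C := by positivity
  refine ⟨C, hC0, ?_⟩
  intro K h A R x hA hR hK hh hKb hhb hsupp hdist
  have hsneg : α - (n : ℝ) < 0 := by
    have h1 : (1 : ℝ) ≤ n := by exact_mod_cast hn
    linarith
  have hsgt : -(n : ℝ) < α - n := by linarith
  set g : EuclideanSpace ℝ (Fin n) → ℝ :=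
    fun y => M * A * (ball (0 : EuclideanSpace ℝ (Fin n)) R).indicator
      (fun y => ‖y‖ ^ (α - (n : ℝ))) y with hg
  have hindnn : ∀ y, 0 ≤ (ball (0 : EuclideanSpace ℝ (Fin n)) R).indicator
      (fun y => ‖y‖ ^ (α - (n : ℝ))) y :=
    fun y => indicator_nonneg (fun z _ => Real.rpow_nonneg (norm_nonneg _) _) y
  have hbound : ∀ y, |K (x - y) * h y| ≤ g y := by
    intro y
    by_cases hy : h y = 0
    · rw [hy, mul_zero, abs_zero, hg]
      exact mul_nonneg (mul_nonneg hM0 hA) (hindnn y)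
    · have hymem : y ∈ Function.support h := hy
      have hyball : y ∈ ball (0 : EuclideanSpace ℝ (Fin n)) R := hsupp hymem
      have hy0 : y ≠ 0 := by
        intro h0
        subst h0
        apply hy
        have := hhb 0
        rw [norm_zero, Real.zero_rpow hα.ne', mul_zero] at this
        exact abs_eq_zero.1 (le_antisymm this (abs_nonneg _))
      have hny : 0 < ‖y‖ := norm_pos_iff.2 hy0
      have hd : c * ‖x‖ ≤ ‖x - y‖ := by
        calc c * ‖x‖ ≤ Metric.infDist x (Function.support h) := hdist
          _ ≤ dist x y := Metric.infDist_le_dist_of_mem hymem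
          _ = ‖x - y‖ := dist_eq_norm x y
      have h1 : ‖y‖ ≤ ‖x‖ + ‖x - y‖ := by
        have h2 := norm_sub_le x (x - y)
        simpa using h2
      have hkey : c / (1 + c) * ‖y‖ ≤ ‖x - y‖ := by
        rw [div_mul_eq_mul_div, div_le_iff₀ (by linarith : (0:ℝ) < 1 + c)]
        nlinarith
      have hxy : 0 < ‖x - y‖ := lt_of_lt_of_le (by positivity) hkey
      have hxy0 : x - y ≠ 0 := norm_pos_iff.1 hxy
      have hKbd : |K (x - y)| ≤ M * ‖y‖ ^ (-(n : ℝ)) := by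
        refine (hKb _ hxy0).trans ?_
        have h3 : ‖x - y‖ ^ (-(n : ℝ)) ≤ (c / (1 + c) * ‖y‖) ^ (-(n : ℝ)) :=
          Real.rpow_le_rpow_of_nonpos (by positivity) hkey
            (neg_nonpos.2 (Nat.cast_nonneg n))
        rw [Real.mul_rpow hcc.le (norm_nonneg _)] at h3
        calc C₀ * ‖x - y‖ ^ (-(n : ℝ))
            ≤ C₀ * ((c / (1 + c)) ^ (-(n : ℝ)) * ‖y‖ ^ (-(n : ℝ))) :=
              mul_le_mul_of_nonneg_left h3 hC₀
          _ = M * ‖y‖ ^ (-(n : ℝ)) := by rw [hM]; ring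
      have h4 : |K (x - y) * h y| ≤ (M * ‖y‖ ^ (-(n : ℝ))) * (A * ‖y‖ ^ α) := by
        rw [abs_mul]
        exact mul_le_mul hKbd (hhb y) (abs_nonneg _) (by positivity)
      rw [hg]
      simp only [indicator_of_mem hyball]
      refine h4.trans (le_of_eq ?_)
      have h5 : ‖y‖ ^ (-(n : ℝ)) * ‖y‖ ^ α = ‖y‖ ^ (α - (n : ℝ)) := by
        rw [← Real.rpow_add hny]
        ring_nf
      calc (M * ‖y‖ ^ (-(n : ℝ))) * (A * ‖y‖ ^ α)
          = M * A * (‖y‖ ^ (-(n : ℝ)) * ‖y‖ ^ α) := by ring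
        _ = M * A * ‖y‖ ^ (α - (n : ℝ)) := by rw [h5]
  have hintg : Integrable g := by
    rw [hg]
    exact ((integrable_indicator_iff measurableSet_ball).2
      (aux_integrableOn hn hsgt hsneg hR)).const_mul (M * A)
  have hmeasf : AEStronglyMeasurable (fun y => K (x - y) * h y) volume :=
    ((hK.comp (measurable_const.sub measurable_id)).mul hh).aestronglyMeasurable
  have hintf : Integrable (fun y => K (x - y) * h y) :=
    hintg.mono' hmeasf (Filter.Eventually.of_forall fun y => by
      rw [Real.norm_eq_abs]; exact hbound y)
  refine ⟨hintf, ?_⟩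
  have h2 : |∫ y, K (x - y) * h y| ≤ ∫ y, g y := by
    rw [← Real.norm_eq_abs]
    refine (norm_integral_le_integral_norm _).trans ?_
    exact integral_mono hintf.norm hintg fun y => by
      rw [Real.norm_eq_abs]; exact hbound y
  have h3 : ∫ y, g y = M * A * ((n : ℝ) * v * (R ^ α / α)) := by
    rw [hg]
    simp only []
    rw [integral_const_mul, integral_indicator measurableSet_ball,
      aux_eval hn hsgt hsneg hR, sub_add_cancel]
  have hRα : 0 ≤ R ^ α := Real.rpow_nonneg hR.le α
  have hite : 0 ≤ (if ‖x‖ ≤ R then |Real.log (‖x‖ / R)| else 0) := by positivity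
  calc |∫ y, K (x - y) * h y|
      ≤ M * A * ((n : ℝ) * v * (R ^ α / α)) := h2.trans h3.le
    _ = (M * ((n : ℝ) * v * (1 / α))) * A * R ^ α := by
        ring
    _ ≤ C * A * R ^ α := by
        have : M * ((n : ℝ) * v * (1 / α)) ≤ C := by rw [hC]; linarith
        exact mul_le_mul_of_nonneg_right
          (mul_le_mul_of_nonneg_right this hA) hRα
    _ ≤ C * A * R ^ α * (1 + (if ‖x‖ ≤ R then |Real.log (‖x‖ / R)| else 0)) := by
        have ht : (0:ℝ) ≤ C * A * R ^ α := by positivity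
        exact le_mul_of_one_le_right ht (by linarith)
end
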